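/- Let (A,B) be a table algebra. Then |ζ_χ| ≥ χ(1_A)⁻¹ for every χ ∈ Irr(A). In particular, if A is commutative then |ζ_χ| ≥ 1 for every χ ∈ Irr(A). -/

import Mathlib

open Matrix
open scoped BigOperators

/-- `(A, B)` is a (possibly noncommutative) C-algebra with degree map `deg` and
structure constants `lam` :
(I) `1 ∈ B`, `B` is a basis, and the structure constants are real;
(II) `star` is a conjugate-linear involutory anti-automorphism with `B* = B`
(encoded by the `StarRing`/`StarModule` instances and `star_mem`);
(III) `λ_{a b 1} = δ_{a, b*} |a|` with `|a| > 0`;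
(IV) `deg` is a `ℂ`-algebra homomorphism with `deg b = |b|` and `deg (x*) = conj (deg x)`. -/
structure IsCAlgebra (A : Type*) [Ring A] [Algebra ℂ A] [StarRing A] [StarModule ℂ A]
    (B : Finset A) (deg : A →ₐ[ℂ] ℂ) (lam : A → A → A → ℝ) : Prop where
  indep : LinearIndependent ℂ (fun x : ↥(B : Set A) => (x : A))
  span_top : Submodule.span ℂ (B : Set A) = ⊤
  one_mem : (1 : A) ∈ B
  star_mem : ∀ b ∈ B, star b ∈ B
  struct : ∀ a ∈ B, ∀ b ∈ B, a * b = ∑ c ∈ B, (lam a b c : ℂ) • c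
  lam_one_eq : ∀ a ∈ B, (lam a (star a) 1 : ℂ) = deg a
  lam_one_ne : ∀ a ∈ B, ∀ b ∈ B, a ≠ star b → lam a b 1 = 0
  deg_pos : ∀ a ∈ B, 0 < lam a (star a) 1
  deg_star : ∀ x : A, deg (star x) = (starRingEnd ℂ) (deg x)

/-- A table algebra is a C-algebra with nonnegative structure constants. -/
structure IsTableAlgebra (A : Type*) [Ring A] [Algebra ℂ A] [StarRing A] [StarModule ℂ A]
    (B : Finset A) (deg : A →ₐ[ℂ] ℂ) (lam : A → A → A → ℝ)
    extends IsCAlgebra A B deg lam : Prop where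
  lam_nonneg : ∀ a ∈ B, ∀ b ∈ B, ∀ c ∈ B, 0 ≤ lam a b c

/-- The standard feasible trace: `ζ(1) = |B⁺|` and `ζ(b) = 0` for `1 ≠ b ∈ B`. -/
def IsStdTrace {A : Type*} [Ring A] [Algebra ℂ A] (B : Finset A) (deg : A →ₐ[ℂ] ℂ)
    (ζ : A →ₗ[ℂ] ℂ) : Prop :=
  ζ 1 = (∑ b ∈ B, deg b) ∧ ∀ b ∈ B, b ≠ 1 → ζ b = 0

/-- `χ` is an irreducible character of `A`: the trace of a surjective (hence irreducible)
matrix representation of positive degree. -/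
def IsIrrChar (A : Type*) [Ring A] [Algebra ℂ A] (χ : A → ℂ) : Prop :=
  ∃ (n : ℕ) (D : A →ₐ[ℂ] Matrix (Fin n) (Fin n) ℂ),
    0 < n ∧ Function.Surjective ⇑D ∧ ∀ a : A, χ a = (D a).trace

/-- `φ` agrees on the corner algebra `H = eAe = {x | e*x*e = x}` with an irreducible
character of `H`: there is an irreducible (i.e. surjective) unital matrix representation
of `H` of positive degree whose trace is `φ` on `H`. -/
def IsIrrCharOn {A : Type*} [Ring A] [Algebra ℂ A] (e : A) (φ : A → ℂ) : Prop :=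
  ∃ (n : ℕ) (D : A → Matrix (Fin n) (Fin n) ℂ),
    0 < n ∧ D e = 1 ∧
    (∀ x y : A, e * x * e = x → e * y * e = y → D (x + y) = D x + D y) ∧
    (∀ (c : ℂ) (x : A), e * x * e = x → D (c • x) = c • D x) ∧
    (∀ x y : A, e * x * e = x → e * y * e = y → D (x * y) = D x * D y) ∧
    (∀ M : Matrix (Fin n) (Fin n) ℂ, ∃ x : A, e * x * e = x ∧ D x = M) ∧
    (∀ x : A, e * x * e = x → φ x = (D x).trace)

/-- `C` is a closed subset of the basis `B` : `C` is nonempty and every basis element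
occurring with nonzero coefficient in `c* ⬝ d` (for `c, d ∈ C`) lies in `C`.
Here `coord b x` is the coefficient of the basis element `b` in `x`. -/
def IsClosedSubset {A : Type*} [Ring A] [Algebra ℂ A] [StarRing A] [StarModule ℂ A]
    (B C : Finset A) (coord : A → A → ℂ) : Prop :=
  C.Nonempty ∧ C ⊆ B ∧ ∀ c ∈ C, ∀ d ∈ C, ∀ b ∈ B, coord b (star c * d) ≠ 0 → b ∈ C

open scoped Classical in
/-- The double coset `CbC` : basis elements occurring with nonzero coefficient
in `C⁺ * b * C⁺`. -/
noncomputable def DCoset {A : Type*} [Ring A] [Algebra ℂ A]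
    (B : Finset A) (coord : A → A → ℂ) (C : Finset A) (b : A) : Finset A :=
  B.filter fun y => coord y ((∑ c ∈ C, c) * b * (∑ c ∈ C, c)) ≠ 0

/-- The quotient basis element `b/C = |C⁺|⁻¹ (CbC)⁺`. -/
noncomputable def quo {A : Type*} [Ring A] [Algebra ℂ A]
    (B : Finset A) (deg : A →ₐ[ℂ] ℂ) (coord : A → A → ℂ) (C : Finset A) (b : A) : A :=
  (∑ c ∈ C, deg c)⁻¹ • ∑ x ∈ DCoset B coord C b, x

/-!
Let `D` be an irreducible representation of degree `k` with character `χ`, and put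
`z = ∑_b |b|⁻¹ χ(b*) b`. As `ζ` vanishes on `B ∖ {1}`, `ζ(z) = k |B⁺|`. The averaged maps
`f ↦ ∑_b |b|⁻¹ D(b) f D'(b*)` intertwine `D` and `D'` because `λ_{ab c*} |c| = λ_{bc a*} |a|`
(compare the coefficients of `1` in `(ab)c = a(bc)`), so Schur's lemma gives `ψ(z) = 0` for every
irreducible `ψ ≠ χ`, and `D(z₁) = S • 1` for `z₁ = ∑_b |b|⁻¹ b b*` and `S = χ(z)`. Hence
`ζ_χ S = k |B⁺|`. In a table algebra the powers of `z₁` are nonnegative combinations of `B`, on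
which every linear functional is bounded by a multiple of the degree map; comparing
`k Sʲ = tr D(z₁ʲ)` with `|z₁ʲ| = |B⁺|ʲ` gives `|S| ≤ |B⁺|`, so `|ζ_χ| ≥ k ≥ 1 ≥ χ(1)⁻¹`.
-/

open Finset

theorem le_of_forall_pow_le_mul_pow {a b C : ℝ} (hb : 0 ≤ b)
    (h : ∀ j : ℕ, a ^ j ≤ C * b ^ j) : a ≤ b := by
  by_contra! hab
  have ha : 0 < a := hb.trans_lt hab
  have hC : 0 < C := by simpa using (h 0).trans_lt' zero_lt_one
  obtain ⟨j, hj⟩ := exists_pow_lt_of_lt_one (inv_pos.mpr hC) ((div_lt_one ha).mpr hab)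
  rw [div_pow, div_lt_iff₀ (pow_pos ha j), lt_inv_mul_iff₀ hC] at hj
  exact (h j).not_gt hj

theorem Matrix.exists_mulVec_eq_of_ne_zero {K n m : Type*} [Field K] [Fintype m]
    [DecidableEq m] {v : m → K} (hv : v ≠ 0) (w : n → K) :
    ∃ X : Matrix n m K, X *ᵥ v = w := by
  obtain ⟨j, hj⟩ := Function.ne_iff.mp hv
  refine ⟨vecMulVec w (Pi.single j (v j)⁻¹), ?_⟩
  rw [vecMulVec_mulVec, single_dotProduct, inv_mul_cancel₀ hj, MulOpposite.op_one, one_smul]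

theorem Matrix.mul_single_one_mul_apply {R n m : Type*} [Semiring R] [Fintype n]
    [DecidableEq n] [Fintype m] [DecidableEq m] (X : Matrix n n R) (Y : Matrix m m R)
    (i : n) (j : m) :
    (X * single i j (1 : R) * Y) i j = X i i * Y j j := by
  rw [mul_apply, sum_eq_single j fun k _ hk => by rw [mul_single_apply_of_ne _ _ _ _ _ hk,
    zero_mul], mul_single_apply_same, mul_one]
  simp

section Schur

variable {K R : Type*} [Field K] [Ring R] [Algebra K R]
  {n m : Type*} [Fintype n] [DecidableEq n] [Fintype m] [DecidableEq m]
  {D : R →ₐ[K] Matrix n n K} {D' : R →ₐ[K] Matrix m m K} {M : Matrix n m K}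

theorem eq_zero_of_intertwines_of_mulVec_eq_zero (hD' : Function.Surjective D')
    (hM : ∀ a, D a * M = M * D' a) {v : m → K} (hv : v ≠ 0) (hMv : M *ᵥ v = 0) : M = 0 := by
  refine ext_iff_mulVec.mpr fun w => ?_
  obtain ⟨X, rfl⟩ := exists_mulVec_eq_of_ne_zero hv w
  obtain ⟨a, rfl⟩ := hD' X
  rw [mulVec_mulVec, ← hM a, ← mulVec_mulVec, hMv, mulVec_zero, zero_mulVec]

theorem mulVec_surjective_of_intertwines (hD : Function.Surjective D)
    (hM : ∀ a, D a * M = M * D' a) (hM0 : M ≠ 0) : Function.Surjective (M *ᵥ ·) := by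
  obtain ⟨u, hu⟩ : ∃ u, M *ᵥ u ≠ 0 := by
    by_contra! h
    exact hM0 (ext_iff_mulVec.mpr fun u => by rw [h u, zero_mulVec])
  intro w
  obtain ⟨X, rfl⟩ := exists_mulVec_eq_of_ne_zero hu w
  obtain ⟨a, rfl⟩ := hD X
  exact ⟨D' a *ᵥ u, by dsimp only; rw [mulVec_mulVec, ← hM a, ← mulVec_mulVec]⟩

theorem trace_eq_of_intertwines (hM : ∀ a, D a * M = M * D' a)
    (hbij : Function.Bijective (toLin' M)) (a : R) : (D a).trace = (D' a).trace := by
  let e := LinearEquiv.ofBijective _ hbij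
  have hconj : toLin' (D a) = e.conj (toLin' (D' a)) := by
    rw [LinearEquiv.conj_apply]
    refine LinearMap.ext fun x => ?_
    obtain ⟨y, rfl⟩ := e.surjective x
    simp only [LinearMap.comp_apply, LinearEquiv.coe_coe, LinearEquiv.symm_apply_apply]
    simp only [e, LinearEquiv.ofBijective_apply, toLin'_apply, mulVec_mulVec, hM a]
  rw [← trace_toLin'_eq, hconj, LinearMap.trace_conj', trace_toLin'_eq]

theorem intertwiner_eq_zero (hD : Function.Surjective D) (hD' : Function.Surjective D')
    (hM : ∀ a, D a * M = M * D' a) (hne : ∃ a, (D a).trace ≠ (D' a).trace) : M = 0 := by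
  by_contra hM0
  obtain ⟨a, ha⟩ := hne
  refine ha (trace_eq_of_intertwines hM ⟨?_, mulVec_surjective_of_intertwines hD hM hM0⟩ a)
  refine (injective_iff_map_eq_zero _).mpr fun v hv => ?_
  by_contra hv0
  exact hM0 (eq_zero_of_intertwines_of_mulVec_eq_zero hD' hM hv0 hv)

theorem exists_eq_smul_one_of_commute (hD : Function.Surjective D) {M : Matrix n n K}
    (hM : ∀ a, D a * M = M * D a) : ∃ c : K, M = c • 1 := by
  obtain ⟨c, hc⟩ := mem_range_scalar_of_commute_single (M := M) fun i j _ => by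
    obtain ⟨a, ha⟩ := hD (single i j 1)
    rw [Commute, SemiconjBy, ← ha, hM a]
  exact ⟨c, by rw [← hc, smul_one_eq_diagonal, scalar_apply]⟩

end Schur

namespace IsCAlgebra

variable {A : Type*} [Ring A] [Algebra ℂ A] [StarRing A] [StarModule ℂ A]
  {B : Finset A} {deg : A →ₐ[ℂ] ℂ} {lam : A → A → A → ℝ}

theorem coeff_eq_of_sum_smul_eq (hA : IsCAlgebra A B deg lam) {g g' : A → ℂ}
    (h : ∑ b ∈ B, g b • b = ∑ b ∈ B, g' b • b) {b : A} (hb : b ∈ B) : g b = g' b := by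
  have h0 : ∑ c : ↥(B : Set A), (g c - g' c) • (c : A) = 0 := by
    rw [Finset.sum_finset_coe (fun c => (g c - g' c) • c) B]
    simp only [sub_smul, sum_sub_distrib, h, sub_self]
  exact sub_eq_zero.mp (linearIndependent_iff'.mp hA.indep univ _ h0 ⟨b, hb⟩ (mem_univ _))

theorem deg_eq (hA : IsCAlgebra A B deg lam) {b : A} (hb : b ∈ B) :
    deg b = lam b (star b) 1 :=
  (hA.lam_one_eq b hb).symm

theorem deg_star_of_mem (hA : IsCAlgebra A B deg lam) {b : A} (hb : b ∈ B) :
    deg (star b) = deg b := by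
  rw [hA.deg_star, hA.deg_eq hb, Complex.conj_ofReal]

theorem deg_ne_zero (hA : IsCAlgebra A B deg lam) {b : A} (hb : b ∈ B) : deg b ≠ 0 := by
  rw [hA.deg_eq hb]
  exact_mod_cast (hA.deg_pos b hb).ne'

theorem sum_deg_ne_zero (hA : IsCAlgebra A B deg lam) : ∑ b ∈ B, deg b ≠ 0 := by
  rw [sum_congr rfl fun b hb => hA.deg_eq hb, ← Complex.ofReal_sum]
  exact_mod_cast (sum_pos (fun b hb => hA.deg_pos b hb) ⟨1, hA.one_mem⟩).ne'

theorem sum_star {M : Type*} [AddCommMonoid M] (hA : IsCAlgebra A B deg lam) (F : A → M) :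
    ∑ b ∈ B, F (star b) = ∑ b ∈ B, F b :=
  sum_nbij' star star hA.star_mem hA.star_mem (fun b _ => star_star b) (fun b _ => star_star b)
    fun _ _ => rfl

theorem mul_sum_smul (hA : IsCAlgebra A B deg lam) {a : A} (ha : a ∈ B) (g : A → ℂ) :
    a * ∑ e ∈ B, g e • e = ∑ f ∈ B, (∑ e ∈ B, g e * lam a e f) • f := by
  calc a * ∑ e ∈ B, g e • e = ∑ e ∈ B, ∑ f ∈ B, (g e * lam a e f) • f := by
        rw [mul_sum]
        refine sum_congr rfl fun e he => ?_
        rw [mul_smul_comm, hA.struct a ha e he, smul_sum]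
        simp only [smul_smul]
    _ = _ := by rw [sum_comm]; simp only [sum_smul]

theorem sum_smul_mul (hA : IsCAlgebra A B deg lam) {c : A} (hc : c ∈ B) (g : A → ℂ) :
    (∑ d ∈ B, g d • d) * c = ∑ f ∈ B, (∑ d ∈ B, g d * lam d c f) • f := by
  calc (∑ d ∈ B, g d • d) * c = ∑ d ∈ B, ∑ f ∈ B, (g d * lam d c f) • f := by
        rw [sum_mul]
        refine sum_congr rfl fun d hd => ?_
        rw [smul_mul_assoc, hA.struct d hd c hc, smul_sum]
        simp only [smul_smul]
    _ = _ := by rw [sum_comm]; simp only [sum_smul]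

theorem sum_lam_mul_lam (hA : IsCAlgebra A B deg lam) {a b c f : A}
    (ha : a ∈ B) (hb : b ∈ B) (hc : c ∈ B) (hf : f ∈ B) :
    ∑ d ∈ B, (lam a b d : ℂ) * lam d c f = ∑ e ∈ B, (lam b c e : ℂ) * lam a e f := by
  have h : ∑ f ∈ B, (∑ d ∈ B, (lam a b d : ℂ) * lam d c f) • f
      = ∑ f ∈ B, (∑ e ∈ B, (lam b c e : ℂ) * lam a e f) • f := by
    rw [← hA.sum_smul_mul hc, ← hA.mul_sum_smul ha, ← hA.struct a ha b hb,
      ← hA.struct b hb c hc, mul_assoc]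
  exact hA.coeff_eq_of_sum_smul_eq h hf

theorem sum_mul_lam_one_right (hA : IsCAlgebra A B deg lam) {c : A} (hc : c ∈ B)
    (g : A → ℂ) : ∑ d ∈ B, g d * lam d c 1 = g (star c) * deg c := by
  rw [sum_eq_single_of_mem (star c) (hA.star_mem c hc)]
  · rw [← hA.deg_star_of_mem hc, ← hA.lam_one_eq _ (hA.star_mem c hc), star_star]
  · intro d hd hdc
    rw [hA.lam_one_ne d hd c hc hdc, Complex.ofReal_zero, mul_zero]

theorem sum_mul_lam_one_left (hA : IsCAlgebra A B deg lam) {a : A} (ha : a ∈ B)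
    (g : A → ℂ) : ∑ e ∈ B, g e * lam a e 1 = g (star a) * deg a := by
  rw [sum_eq_single_of_mem (star a) (hA.star_mem a ha)]
  · rw [hA.lam_one_eq a ha]
  · intro e he hea
    rw [hA.lam_one_ne a ha e he fun h => hea (by rw [h, star_star]), Complex.ofReal_zero,
      mul_zero]

theorem lam_star_mul_deg (hA : IsCAlgebra A B deg lam) {a b c : A}
    (ha : a ∈ B) (hb : b ∈ B) (hc : c ∈ B) :
    (lam a b (star c) : ℂ) * deg c = lam b c (star a) * deg a := by
  have h := hA.sum_lam_mul_lam ha hb hc hA.one_mem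
  rwa [hA.sum_mul_lam_one_right hc, hA.sum_mul_lam_one_left ha] at h

end IsCAlgebra

section BasisAverage

variable {A : Type*} [Ring A] [Algebra ℂ A] [StarRing A]
  {n m : Type*} [Fintype n] [DecidableEq n] [Fintype m] [DecidableEq m]

noncomputable def basisAverage (B : Finset A) (deg : A →ₐ[ℂ] ℂ)
    (D : A →ₐ[ℂ] Matrix n n ℂ) (D' : A →ₐ[ℂ] Matrix m m ℂ) :
    Matrix n m ℂ →ₗ[ℂ] Matrix n m ℂ where
  toFun f := ∑ b ∈ B, (deg b)⁻¹ • (D b * f * D' (star b))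
  map_add' f g := by simp only [Matrix.mul_add, Matrix.add_mul, smul_add, sum_add_distrib]
  map_smul' c f := by
    simp only [Matrix.mul_smul, Matrix.smul_mul, smul_comm c, smul_sum, RingHom.id_apply]

theorem basisAverage_apply (B : Finset A) (deg : A →ₐ[ℂ] ℂ)
    (D : A →ₐ[ℂ] Matrix n n ℂ) (D' : A →ₐ[ℂ] Matrix m m ℂ) (f : Matrix n m ℂ) :
    basisAverage B deg D D' f = ∑ b ∈ B, (deg b)⁻¹ • (D b * f * D' (star b)) :=
  rfl

noncomputable def charPairing (B : Finset A) (deg : A →ₐ[ℂ] ℂ) (φ ψ : A → ℂ) : ℂ :=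
  ∑ b ∈ B, (deg b)⁻¹ * (φ b * ψ (star b))

theorem trace_map_sum_smul_eq_charPairing (B : Finset A) (deg : A →ₐ[ℂ] ℂ)
    (D : A →ₐ[ℂ] Matrix n n ℂ) (χ : A → ℂ) :
    (D (∑ b ∈ B, ((deg b)⁻¹ * χ (star b)) • b)).trace
      = charPairing B deg (fun a => (D a).trace) χ := by
  simp only [map_sum, map_smul, trace_sum, trace_smul, smul_eq_mul, charPairing]
  exact sum_congr rfl fun b _ => by ring

noncomputable def casimir (B : Finset A) (deg : A →ₐ[ℂ] ℂ) : A :=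
  ∑ b ∈ B, (deg b)⁻¹ • (b * star b)

theorem map_casimir_eq_basisAverage_one (B : Finset A) (deg : A →ₐ[ℂ] ℂ)
    (D : A →ₐ[ℂ] Matrix n n ℂ) : D (casimir B deg) = basisAverage B deg D D 1 := by
  simp only [casimir, basisAverage_apply, map_sum, map_smul, map_mul, Matrix.mul_one]

theorem charPairing_trace_eq_sum_basisAverage_single (B : Finset A) (deg : A →ₐ[ℂ] ℂ)
    (D : A →ₐ[ℂ] Matrix n n ℂ) (D' : A →ₐ[ℂ] Matrix m m ℂ) :
    charPairing B deg (fun a => (D a).trace) (fun a => (D' a).trace)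
      = ∑ i, ∑ j, basisAverage B deg D D' (single i j 1) i j := by
  simp only [charPairing, basisAverage_apply, Matrix.sum_apply, Matrix.smul_apply, smul_eq_mul,
    mul_single_one_mul_apply, trace, Matrix.diag]
  simp only [sum_mul, mul_sum]
  rw [sum_congr rfl fun b _ => sum_comm, sum_comm]
  exact sum_congr rfl fun i _ => sum_comm

namespace IsCAlgebra

variable [StarModule ℂ A] {B : Finset A} {deg : A →ₐ[ℂ] ℂ} {lam : A → A → A → ℝ}

theorem basisAverage_intertwines_of_mem (hA : IsCAlgebra A B deg lam)
    (D : A →ₐ[ℂ] Matrix n n ℂ) (D' : A →ₐ[ℂ] Matrix m m ℂ) (f : Matrix n m ℂ)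
    {a : A} (ha : a ∈ B) :
    D a * basisAverage B deg D D' f = basisAverage B deg D D' f * D' a := by
  have hL : D a * basisAverage B deg D D' f
      = ∑ e ∈ B, ∑ c ∈ B, ((deg e)⁻¹ * lam a e c) • (D c * f * D' (star e)) := by
    rw [basisAverage_apply, Matrix.mul_sum]
    refine sum_congr rfl fun e he => ?_
    rw [Matrix.mul_smul, ← Matrix.mul_assoc, ← Matrix.mul_assoc, ← map_mul,
      hA.struct a ha e he, map_sum, Matrix.sum_mul, Matrix.sum_mul, smul_sum]
    refine sum_congr rfl fun c _ => ?_
    rw [map_smul, Matrix.smul_mul, Matrix.smul_mul, smul_smul]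
  have hR : basisAverage B deg D D' f * D' a
      = ∑ c ∈ B, ∑ e ∈ B, ((deg c)⁻¹ * lam (star c) a (star e)) • (D c * f * D' (star e)) := by
    rw [basisAverage_apply, Matrix.sum_mul]
    refine sum_congr rfl fun c hc => ?_
    rw [Matrix.smul_mul, Matrix.mul_assoc, Matrix.mul_assoc, ← map_mul,
      hA.struct _ (hA.star_mem c hc) a ha, ← hA.sum_star fun e => (lam (star c) a e : ℂ) • e,
      map_sum, Matrix.mul_sum, Matrix.mul_sum, smul_sum]
    refine sum_congr rfl fun e _ => ?_
    rw [map_smul, Matrix.mul_smul, Matrix.mul_smul, smul_smul, Matrix.mul_assoc]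
  rw [hL, hR, sum_comm]
  refine sum_congr rfl fun c hc => sum_congr rfl fun e he => ?_
  have h := hA.lam_star_mul_deg (hA.star_mem c hc) ha he
  rw [star_star, hA.deg_star_of_mem hc] at h
  have hc0 := hA.deg_ne_zero hc
  have he0 := hA.deg_ne_zero he
  congr 1
  field_simp
  linear_combination -h

theorem basisAverage_intertwines (hA : IsCAlgebra A B deg lam)
    (D : A →ₐ[ℂ] Matrix n n ℂ) (D' : A →ₐ[ℂ] Matrix m m ℂ) (f : Matrix n m ℂ) (a : A) :
    D a * basisAverage B deg D D' f = basisAverage B deg D D' f * D' a := by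
  have ha : a ∈ Submodule.span ℂ (B : Set A) := hA.span_top ▸ Submodule.mem_top
  induction ha using Submodule.span_induction with
  | mem x hx => exact hA.basisAverage_intertwines_of_mem D D' f hx
  | zero => simp
  | add x y _ _ hx hy => rw [map_add, map_add, Matrix.add_mul, Matrix.mul_add, hx, hy]
  | smul c x _ hx => rw [map_smul, map_smul, Matrix.smul_mul, Matrix.mul_smul, hx]

theorem charPairing_trace_eq_zero (hA : IsCAlgebra A B deg lam)
    {D : A →ₐ[ℂ] Matrix n n ℂ} {D' : A →ₐ[ℂ] Matrix m m ℂ}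
    (hD : Function.Surjective D) (hD' : Function.Surjective D')
    (hne : ∃ a, (D a).trace ≠ (D' a).trace) :
    charPairing B deg (fun a => (D a).trace) (fun a => (D' a).trace) = 0 := by
  rw [charPairing_trace_eq_sum_basisAverage_single]
  simp [intertwiner_eq_zero hD hD' (hA.basisAverage_intertwines D D' _) hne]

theorem map_casimir (hA : IsCAlgebra A B deg lam) {D : A →ₐ[ℂ] Matrix n n ℂ}
    (hD : Function.Surjective D) :
    D (casimir B deg) = charPairing B deg (fun a => (D a).trace) (fun a => (D a).trace) • 1 := by
  choose c hc using fun f => exists_eq_smul_one_of_commute hD (hA.basisAverage_intertwines D D f)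
  have hdiag : ∀ i, ∑ j, basisAverage B deg D D (single i j 1) i j = c (single i i 1) := by
    intro i
    simp [hc, Matrix.smul_apply, one_apply]
  have hone : basisAverage B deg D D 1 = ∑ i, basisAverage B deg D D (single i i 1) := by
    rw [← map_sum, sum_single_one]
  rw [charPairing_trace_eq_sum_basisAverage_single, sum_congr rfl fun i _ => hdiag i, sum_smul,
    map_casimir_eq_basisAverage_one, hone]
  exact sum_congr rfl fun i _ => hc _

end IsCAlgebra

end BasisAverage

section NonnegCombinations

variable {A : Type*} [Ring A] [Algebra ℂ A] [StarRing A] [StarModule ℂ A]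
  {B : Finset A} {deg : A →ₐ[ℂ] ℂ} {lam : A → A → A → ℝ}

def nonnegCombinations (B : Finset A) : Set A :=
  {x | ∃ ν : A → ℝ, (∀ c ∈ B, 0 ≤ ν c) ∧ x = ∑ c ∈ B, (ν c : ℂ) • c}

theorem IsCAlgebra.one_mem_nonnegCombinations (hA : IsCAlgebra A B deg lam) :
    (1 : A) ∈ nonnegCombinations B := by
  classical
  refine ⟨fun c => if c = 1 then 1 else 0, fun c _ => by positivity, ?_⟩
  simp [hA.one_mem]

theorem IsTableAlgebra.mul_mem_nonnegCombinations (hTA : IsTableAlgebra A B deg lam) {x y : A}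
    (hx : x ∈ nonnegCombinations B) (hy : y ∈ nonnegCombinations B) :
    x * y ∈ nonnegCombinations B := by
  obtain ⟨ν, hν, rfl⟩ := hx
  obtain ⟨μ, hμ, rfl⟩ := hy
  refine ⟨fun f => ∑ c ∈ B, ν c * ∑ d ∈ B, μ d * lam c d f, fun f hf => sum_nonneg fun c hc =>
    mul_nonneg (hν c hc) (sum_nonneg fun d hd => mul_nonneg (hμ d hd)
      (hTA.lam_nonneg c hc d hd f hf)), ?_⟩
  calc (∑ c ∈ B, (ν c : ℂ) • c) * ∑ d ∈ B, (μ d : ℂ) • d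
      = ∑ c ∈ B, ∑ f ∈ B, ((ν c : ℂ) * ∑ d ∈ B, (μ d : ℂ) * lam c d f) • f := by
        rw [sum_mul]
        refine sum_congr rfl fun c hc => ?_
        rw [smul_mul_assoc, hTA.mul_sum_smul hc, smul_sum]
        simp only [smul_smul]
    _ = _ := by
        rw [sum_comm]
        push_cast
        simp only [sum_smul]

theorem IsTableAlgebra.pow_mem_nonnegCombinations (hTA : IsTableAlgebra A B deg lam) {x : A}
    (hx : x ∈ nonnegCombinations B) (j : ℕ) : x ^ j ∈ nonnegCombinations B := by
  induction j with
  | zero => simpa using hTA.one_mem_nonnegCombinations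
  | succ j ih => simpa [pow_succ] using hTA.mul_mem_nonnegCombinations ih hx

theorem IsTableAlgebra.casimir_mem_nonnegCombinations (hTA : IsTableAlgebra A B deg lam) :
    casimir B deg ∈ nonnegCombinations B := by
  refine ⟨fun c => ∑ b ∈ B, (lam b (star b) 1)⁻¹ * lam b (star b) c, fun c hc =>
    sum_nonneg fun b hb => mul_nonneg (inv_nonneg.mpr (hTA.deg_pos b hb).le)
      (hTA.lam_nonneg b hb (star b) (hTA.star_mem b hb) c hc), ?_⟩
  calc casimir B deg
      = ∑ b ∈ B, ∑ c ∈ B, (((lam b (star b) 1)⁻¹ * lam b (star b) c : ℝ) : ℂ) • c := by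
        refine sum_congr rfl fun b hb => ?_
        rw [hTA.struct b hb (star b) (hTA.star_mem b hb), smul_sum, hTA.deg_eq hb]
        push_cast
        simp only [smul_smul]
    _ = _ := by
        rw [sum_comm]
        push_cast
        simp only [sum_smul]

theorem IsCAlgebra.deg_casimir (hA : IsCAlgebra A B deg lam) :
    deg (casimir B deg) = ∑ b ∈ B, deg b := by
  rw [casimir, map_sum]
  refine sum_congr rfl fun b hb => ?_
  rw [map_smul, map_mul, hA.deg_star_of_mem hb, smul_eq_mul,
    inv_mul_cancel_left₀ (hA.deg_ne_zero hb)]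

theorem IsCAlgebra.exists_norm_le_mul_norm_deg (hA : IsCAlgebra A B deg lam) (φ : A →ₗ[ℂ] ℂ) :
    ∃ C, ∀ x ∈ nonnegCombinations B, ‖φ x‖ ≤ C * ‖deg x‖ := by
  refine ⟨∑ c ∈ B, ‖φ c‖ / lam c (star c) 1, ?_⟩
  rintro x ⟨ν, hν, rfl⟩
  have hdeg : deg (∑ c ∈ B, (ν c : ℂ) • c) = ((∑ c ∈ B, ν c * lam c (star c) 1 : ℝ) : ℂ) := by
    rw [map_sum, Complex.ofReal_sum]
    refine sum_congr rfl fun c hc => ?_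
    rw [map_smul, hA.deg_eq hc, smul_eq_mul, Complex.ofReal_mul]
  have hpos : ∀ c ∈ B, 0 < lam c (star c) 1 := hA.deg_pos
  rw [hdeg, Complex.norm_of_nonneg (sum_nonneg fun c hc => mul_nonneg (hν c hc) (hpos c hc).le),
    mul_sum]
  calc ‖φ (∑ c ∈ B, (ν c : ℂ) • c)‖ ≤ ∑ c ∈ B, ν c * ‖φ c‖ := by
        rw [map_sum]
        refine (norm_sum_le _ _).trans_eq (sum_congr rfl fun c hc => ?_)
        rw [map_smul, norm_smul, Complex.norm_of_nonneg (hν c hc)]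
    _ ≤ _ := sum_le_sum fun c hc => by
        have hle := single_le_sum (f := fun c => ‖φ c‖ / lam c (star c) 1)
          (fun d hd => div_nonneg (norm_nonneg _) (hpos d hd).le) hc
        rw [div_le_iff₀ (hpos c hc)] at hle
        nlinarith [hν c hc]

end NonnegCombinations

theorem IsStdTrace.map_sum_smul {A : Type*} [Ring A] [Algebra ℂ A] {B : Finset A}
    {deg : A →ₐ[ℂ] ℂ} {ζ : A →ₗ[ℂ] ℂ} (hζ : IsStdTrace B deg ζ) (h1 : (1 : A) ∈ B)
    (g : A → ℂ) : ζ (∑ b ∈ B, g b • b) = g 1 * ∑ b ∈ B, deg b := by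
  rw [map_sum, sum_eq_single_of_mem 1 h1 fun b hb hb1 => by rw [map_smul, hζ.2 b hb hb1,
    smul_zero], map_smul, hζ.1, smul_eq_mul]

section Multiplicities

variable {A : Type*} [Ring A] [Algebra ℂ A] [StarRing A] [StarModule ℂ A]
  {B : Finset A} {deg : A →ₐ[ℂ] ℂ} {lam : A → A → A → ℝ}
  {n : Type*} [Fintype n] [DecidableEq n]

theorem IsTableAlgebra.norm_le_norm_deg_of_map_eq_smul_one [Nonempty n]
    (hTA : IsTableAlgebra A B deg lam) (D : A →ₐ[ℂ] Matrix n n ℂ) {x : A}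
    (hx : x ∈ nonnegCombinations B) {s : ℂ} (hDx : D x = s • 1) : ‖s‖ ≤ ‖deg x‖ := by
  obtain ⟨C, hC⟩ := hTA.exists_norm_le_mul_norm_deg ((traceLinearMap n ℂ ℂ).comp D.toLinearMap)
  refine le_of_forall_pow_le_mul_pow (C := C) (norm_nonneg _) fun j => ?_
  have hj := hC _ (hTA.pow_mem_nonnegCombinations hx j)
  have hcard : (1 : ℝ) ≤ Fintype.card n := by exact_mod_cast Fintype.card_pos
  simp only [LinearMap.comp_apply, AlgHom.toLinearMap_apply, traceLinearMap_apply, map_pow, hDx,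
    smul_pow, one_pow, trace_smul, trace_one, smul_eq_mul, norm_mul, norm_pow,
    Complex.norm_natCast] at hj
  nlinarith [pow_nonneg (norm_nonneg s) j]

theorem IsTableAlgebra.norm_charPairing_trace_self_le [Nonempty n]
    (hTA : IsTableAlgebra A B deg lam) {D : A →ₐ[ℂ] Matrix n n ℂ} (hD : Function.Surjective D) :
    ‖charPairing B deg (fun a => (D a).trace) (fun a => (D a).trace)‖ ≤ ‖∑ b ∈ B, deg b‖ :=
  hTA.deg_casimir ▸ hTA.norm_le_norm_deg_of_map_eq_smul_one D
    hTA.casimir_mem_nonnegCombinations (hTA.map_casimir hD)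

theorem IsCAlgebra.multiplicity_mul_charPairing_self (hA : IsCAlgebra A B deg lam)
    {ζ : A →ₗ[ℂ] ℂ} (hζ : IsStdTrace B deg ζ) {Irr : Finset (A → ℂ)}
    (hIrr : ∀ ψ ∈ Irr, IsIrrChar A ψ) {m : (A → ℂ) → ℂ}
    (hdec : ∀ a, ζ a = ∑ ψ ∈ Irr, m ψ * ψ a) {D : A →ₐ[ℂ] Matrix n n ℂ}
    (hD : Function.Surjective D) (hχ : (fun a => (D a).trace) ∈ Irr) :
    m (fun a => (D a).trace) * charPairing B deg (fun a => (D a).trace) (fun a => (D a).trace)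
      = Fintype.card n * ∑ b ∈ B, deg b := by
  set χ : A → ℂ := fun a => (D a).trace
  set z := ∑ b ∈ B, ((deg b)⁻¹ * χ (star b)) • b
  have hζz : ζ z = Fintype.card n * ∑ b ∈ B, deg b := by
    simp [z, χ, hζ.map_sum_smul hA.one_mem]
  have horth : ∀ ψ ∈ Irr, ψ ≠ χ → ψ z = 0 := by
    intro ψ hψ hψχ
    obtain ⟨k, D', -, hD', hψD'⟩ := hIrr ψ hψ
    obtain rfl : ψ = fun a => (D' a).trace := funext hψD'
    refine (trace_map_sum_smul_eq_charPairing B deg D' χ).trans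
      (hA.charPairing_trace_eq_zero hD' hD ?_)
    by_contra! h
    exact hψχ (funext h)
  rw [← hζz, hdec, sum_eq_single_of_mem χ hχ fun ψ hψ hψχ => by rw [horth ψ hψ hψχ, mul_zero]]
  exact congrArg _ (trace_map_sum_smul_eq_charPairing B deg D χ).symm

theorem IsTableAlgebra.card_le_norm_multiplicity [Nonempty n] (hTA : IsTableAlgebra A B deg lam)
    {ζ : A →ₗ[ℂ] ℂ} (hζ : IsStdTrace B deg ζ) {Irr : Finset (A → ℂ)}
    (hIrr : ∀ ψ ∈ Irr, IsIrrChar A ψ) {m : (A → ℂ) → ℂ}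
    (hdec : ∀ a, ζ a = ∑ ψ ∈ Irr, m ψ * ψ a) {D : A →ₐ[ℂ] Matrix n n ℂ}
    (hD : Function.Surjective D) (hχ : (fun a => (D a).trace) ∈ Irr) :
    (Fintype.card n : ℝ) ≤ ‖m (fun a => (D a).trace)‖ := by
  have hmul := congrArg norm (hTA.multiplicity_mul_charPairing_self hζ hIrr hdec hD hχ)
  rw [norm_mul, norm_mul, Complex.norm_natCast] at hmul
  refine le_of_mul_le_mul_right ?_ (norm_pos_iff.mpr hTA.sum_deg_ne_zero)
  rw [← hmul]
  exact mul_le_mul_of_nonneg_left (hTA.norm_charPairing_trace_self_le hD) (norm_nonneg _)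

end Multiplicities

theorem stmt13_general {A : Type*} [Ring A] [Algebra ℂ A] [StarRing A] [StarModule ℂ A]
    (B : Finset A) (deg : A →ₐ[ℂ] ℂ) (lam : A → A → A → ℝ)
    (hTA : IsTableAlgebra A B deg lam)
    (ζ : A →ₗ[ℂ] ℂ) (hζ : IsStdTrace B deg ζ)
    (Irr : Finset (A → ℂ)) (hIrr : ∀ χ : A → ℂ, χ ∈ Irr ↔ IsIrrChar A χ)
    (m : (A → ℂ) → ℂ)
    (hdec : ∀ a : A, ζ a = ∑ χ ∈ Irr, m χ * χ a) :
    (∀ χ ∈ Irr, ((χ 1).re)⁻¹ ≤ ‖m χ‖) ∧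
    ((∀ x y : A, x * y = y * x) → ∀ χ ∈ Irr, 1 ≤ ‖m χ‖) := by
  have key : ∀ χ ∈ Irr, 1 ≤ (χ 1).re ∧ (χ 1).re ≤ ‖m χ‖ := by
    intro χ hχ
    obtain ⟨k, D, hk, hD, hχD⟩ := (hIrr χ).mp hχ
    have : Nonempty (Fin k) := Fin.pos_iff_nonempty.mp hk
    obtain rfl : χ = fun a => (D a).trace := funext hχD
    have hdegree : ((D 1).trace).re = k := by simp
    refine ⟨by rw [hdegree]; exact_mod_cast hk, ?_⟩
    simpa [hdegree] using
      hTA.card_le_norm_multiplicity hζ (fun ψ hψ => (hIrr ψ).mp hψ) hdec hD hχ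
  refine ⟨fun χ hχ => ?_, fun _ χ hχ => (key χ hχ).1.trans (key χ hχ).2⟩
  exact (inv_le_one_of_one_le₀ (key χ hχ).1).trans ((key χ hχ).1.trans (key χ hχ).2)

/-- `|ζ_χ| ≥ χ(1)⁻¹` for every `χ ∈ Irr(A)`; in particular if `A` is
commutative then `|ζ_χ| ≥ 1`. -/
theorem stmt13 {A : Type*} [Ring A] [Algebra ℂ A] [StarRing A] [StarModule ℂ A]
    (B : Finset A) (deg : A →ₐ[ℂ] ℂ) (lam : A → A → A → ℝ)
    (hTA : IsTableAlgebra A B deg lam)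
    (ζ : A →ₗ[ℂ] ℂ) (hζ : IsStdTrace B deg ζ)
    (Irr : Finset (A → ℂ)) (hIrr : ∀ χ : A → ℂ, χ ∈ Irr ↔ IsIrrChar A χ)
    (m : (A → ℂ) → ℂ) (hm0 : ∀ χ ∈ Irr, m χ ≠ 0)
    (hdec : ∀ a : A, ζ a = ∑ χ ∈ Irr, m χ * χ a) :
    (∀ χ ∈ Irr, ((χ 1).re)⁻¹ ≤ ‖m χ‖) ∧
    ((∀ x y : A, x * y = y * x) → ∀ χ ∈ Irr, 1 ≤ ‖m χ‖) :=
  stmt13_general B deg lam hTA ζ hζ Irr hIrr m hdec
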